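/- Let V be a finite-dimensional real vector space and ω a nondegenerate alternating bilinear form on V. Then the set of linear complex structures J on V compatible with ω (i.e., J² = -id, ω(Jv, Jw) = ω(v,w) for all v,w, and ω(v, Jv) > 0 for all v ≠ 0) is nonempty and contractible. -/

import Mathlib

/-!
STATEMENT 13: Let `V` be a finite-dimensional real vector space and `ω` a nondegenerate
alternating bilinear form on `V`.  Then the set of linear complex structures `J` on `V`
compatible with `ω` (i.e. `J² = -id`, `ω(Jv, Jw) = ω(v, w)` for all `v, w`, and
`ω(v, Jv) > 0` for all `v ≠ 0`) is nonempty and contractible.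

The set of compatible complex structures is topologized as a subspace of the space of
(automatically continuous) linear endomorphisms of `V`; to speak of this topology we equip the
finite-dimensional space `V` with a norm (all of which induce the same topology).
-/

open Set

/-- The set of linear complex structures on `V` compatible with a given bilinear form `ω`. -/
def compatibleComplexStructures (V : Type*) [NormedAddCommGroup V] [NormedSpace ℝ V]
    (ω : V →ₗ[ℝ] V →ₗ[ℝ] ℝ) : Set (V →L[ℝ] V) :=
  {J | (∀ v, J (J v) = -v) ∧ (∀ v w, ω (J v) (J w) = ω v w) ∧ (∀ v, v ≠ 0 → 0 < ω v (J v))}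

/-!
For existence, choose `v, w` with `ω v w = 1`. The `ω`-orthogonal complement `U` of
`span {v, w}` is a smaller symplectic space, and a compatible structure on `U` extends to `V`
by `v ↦ w ↦ -v`.

For contractibility, fix a compatible `J₀`. The operators `W` that anticommute with `J₀`, are
`ω`-skew and strictly contract the metric `ω(·, J₀ ·)` form a convex set, and the Cayley
transform `W ↦ (1 - W) J₀ (1 - W)⁻¹` maps it onto the compatible structures, with continuous
right inverse `J ↦ 1 - 2 (1 - J₀ J)⁻¹`. So the compatible structures are a retract of a
contractible space.
-/

open Function Module

def IsCompatibleComplexStructure {V : Type*} [AddCommGroup V] [Module ℝ V]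
    (ω : V →ₗ[ℝ] V →ₗ[ℝ] ℝ) (J : V →ₗ[ℝ] V) : Prop :=
  (∀ v, J (J v) = -v) ∧ (∀ v w, ω (J v) (J w) = ω v w) ∧ ∀ v, v ≠ 0 → 0 < ω v (J v)

section Existence

variable {V : Type*} [AddCommGroup V] [Module ℝ V] {ω : V →ₗ[ℝ] V →ₗ[ℝ] ℝ}

theorem isCompatibleComplexStructure_zero [Subsingleton V] : IsCompatibleComplexStructure ω 0 :=
  ⟨fun _ => Subsingleton.elim _ _, fun _ _ => by simp [Subsingleton.elim _ (0 : V)],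
    fun v hv => absurd (Subsingleton.elim v 0) hv⟩

variable (ω) in
def pairOrthogonal (v w : V) : Submodule ℝ V := LinearMap.ker (ω v) ⊓ LinearMap.ker (ω w)

variable (ω) in
def pairOrthogonalProj (v w : V) : V →ₗ[ℝ] V :=
  LinearMap.id + (ω w).smulRight v - (ω v).smulRight w

theorem pairOrthogonalProj_apply (v w x : V) :
    pairOrthogonalProj ω v w x = x + ω w x • v - ω v x • w := rfl

variable (ω) in
theorem eq_add_pairOrthogonalProj (v w x : V) :
    x = -ω w x • v + ω v x • w + pairOrthogonalProj ω v w x := by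
  rw [pairOrthogonalProj_apply]; module

variable {v w : V}

theorem pairOrthogonalProj_mem (hω : ω.IsAlt) (hvw : ω v w = 1) (x : V) :
    pairOrthogonalProj ω v w x ∈ pairOrthogonal ω v w := by
  have hwv : ω w v = -1 := by rw [← hω.neg, hvw]
  refine ⟨?_, ?_⟩ <;>
    simp [pairOrthogonalProj_apply, hω.self_eq_zero, hvw, hwv]

theorem apply_eq_zero_of_mem_pairOrthogonal (hω : ω.IsAlt) {u : V}
    (hu : u ∈ pairOrthogonal ω v w) : ω u v = 0 ∧ ω u w = 0 :=
  ⟨by rw [← hω.neg, hu.1, neg_zero], by rw [← hω.neg, hu.2, neg_zero]⟩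

theorem apply_eq_pairOrthogonalProj (hω : ω.IsAlt) (hvw : ω v w = 1) (x y : V) :
    ω x y = ω v x * ω w y - ω w x * ω v y
      + ω (pairOrthogonalProj ω v w x) (pairOrthogonalProj ω v w y) := by
  have hwv : ω w v = -1 := by rw [← hω.neg, hvw]
  have hmem := pairOrthogonalProj_mem hω hvw
  have hv : ∀ z, ω v (pairOrthogonalProj ω v w z) = 0 := fun z => (hmem z).1
  have hw : ∀ z, ω w (pairOrthogonalProj ω v w z) = 0 := fun z => (hmem z).2
  have hv' : ∀ z, ω (pairOrthogonalProj ω v w z) v = 0 := fun z =>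
    (apply_eq_zero_of_mem_pairOrthogonal hω (hmem z)).1
  have hw' : ∀ z, ω (pairOrthogonalProj ω v w z) w = 0 := fun z =>
    (apply_eq_zero_of_mem_pairOrthogonal hω (hmem z)).2
  conv_lhs => rw [eq_add_pairOrthogonalProj ω v w x, eq_add_pairOrthogonalProj ω v w y]
  simp only [map_add, map_smul, LinearMap.add_apply, LinearMap.smul_apply, smul_eq_mul,
    hω.self_eq_zero, hvw, hwv, hv, hw, hv', hw']
  ring

theorem exists_isCompatibleComplexStructure_of_pairOrthogonal (hω : ω.IsAlt)
    (hvw : ω v w = 1) {J' : pairOrthogonal ω v w →ₗ[ℝ] pairOrthogonal ω v w}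
    (hJ' : IsCompatibleComplexStructure
      (ω.domRestrict₁₂ (pairOrthogonal ω v w) (pairOrthogonal ω v w)) J') :
    ∃ J : V →ₗ[ℝ] V, IsCompatibleComplexStructure ω J := by
  obtain ⟨hJ'sq, hJ'ω, hJ'pos⟩ := hJ'
  have hwv : ω w v = -1 := by rw [← hω.neg, hvw]
  let p : V →ₗ[ℝ] pairOrthogonal ω v w :=
    (pairOrthogonalProj ω v w).codRestrict _ (pairOrthogonalProj_mem hω hvw)
  have hp : ∀ x, (p x : V) = x + ω w x • v - ω v x • w := fun _ => rfl
  let J : V →ₗ[ℝ] V :=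
    (ω w).smulRight (-w) - (ω v).smulRight v + (pairOrthogonal ω v w).subtype ∘ₗ J' ∘ₗ p
  have hJ : ∀ x, J x = ω w x • -w - ω v x • v + J' (p x) := fun _ => rfl
  have hvJ : ∀ x, ω v (J x) = -ω w x := fun x => by
    simp [hJ, hvw, hω.self_eq_zero, LinearMap.mem_ker.1 (J' (p x)).2.1]
  have hwJ : ∀ x, ω w (J x) = ω v x := fun x => by
    simp [hJ, hwv, hω.self_eq_zero, LinearMap.mem_ker.1 (J' (p x)).2.2]
  have hpJ : ∀ x, p (J x) = J' (p x) := fun x => by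
    ext; rw [hp, hvJ, hwJ, hJ]; module
  have hform : ∀ x y, ω x y = ω v x * ω w y - ω w x * ω v y + ω (p x) (p y) :=
    apply_eq_pairOrthogonalProj hω hvw
  have hdec : ∀ x, x = -ω w x • v + ω v x • w + p x := eq_add_pairOrthogonalProj ω v w
  refine ⟨J, fun x => ?_, fun x y => ?_, fun x hx => ?_⟩
  · conv_rhs => rw [hdec x]
    rw [hJ (J x), hvJ, hwJ, hpJ, hJ'sq]
    simp only [Submodule.coe_neg]
    module
  · rw [hform (J x) (J y), hform x y, hvJ, hvJ, hwJ, hwJ, hpJ, hpJ]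
    have := hJ'ω (p x) (p y)
    rw [LinearMap.domRestrict₁₂_apply, LinearMap.domRestrict₁₂_apply] at this
    rw [this]
    ring
  · rw [hform x (J x), hvJ, hwJ, hpJ]
    by_cases hpx : p x = 0
    · have hcoord : ω v x ≠ 0 ∨ ω w x ≠ 0 := by
        by_contra! h
        exact hx (by rw [hdec x, h.1, h.2, hpx]; simp)
      rw [hpx]
      simp only [ZeroMemClass.coe_zero, map_zero, add_zero]
      rcases hcoord with h | h <;>
        nlinarith [sq_pos_of_ne_zero h, sq_nonneg (ω v x), sq_nonneg (ω w x)]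
    · have := hJ'pos (p x) hpx
      rw [LinearMap.domRestrict₁₂_apply] at this
      nlinarith [sq_nonneg (ω v x), sq_nonneg (ω w x)]

theorem domRestrict₁₂_pairOrthogonal_nondegenerate (hω : ω.IsAlt) (hvw : ω v w = 1)
    (hnd : ∀ x, x ≠ 0 → ∃ y, ω x y ≠ 0) (x : pairOrthogonal ω v w) (hx : x ≠ 0) :
    ∃ y, ω.domRestrict₁₂ (pairOrthogonal ω v w) (pairOrthogonal ω v w) x y ≠ 0 := by
  obtain ⟨z, hz⟩ := hnd x (by simpa using hx)
  refine ⟨⟨pairOrthogonalProj ω v w z, pairOrthogonalProj_mem hω hvw z⟩, ?_⟩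
  obtain ⟨hxv, hxw⟩ := apply_eq_zero_of_mem_pairOrthogonal hω x.2
  simpa [LinearMap.domRestrict₁₂_apply, pairOrthogonalProj_apply, hxv, hxw] using hz

theorem finrank_pairOrthogonal_lt [FiniteDimensional ℝ V] (hvw : ω v w = 1) :
    finrank ℝ (pairOrthogonal ω v w) < finrank ℝ V := by
  refine Submodule.finrank_lt fun h => ?_
  have : ω v w = 0 := (h ▸ Submodule.mem_top : w ∈ pairOrthogonal ω v w).1
  simp [hvw] at this

end Existence

theorem exists_isCompatibleComplexStructure {V : Type*} [AddCommGroup V] [Module ℝ V]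
    [FiniteDimensional ℝ V] {ω : V →ₗ[ℝ] V →ₗ[ℝ] ℝ} (hω : ω.IsAlt)
    (hnd : ∀ x, x ≠ 0 → ∃ y, ω x y ≠ 0) : ∃ J, IsCompatibleComplexStructure ω J := by
  induction h : finrank ℝ V using Nat.strong_induction_on generalizing V with
  | _ n ih =>
    rcases subsingleton_or_nontrivial V with _ | _
    · exact ⟨0, isCompatibleComplexStructure_zero⟩
    obtain ⟨v, hv⟩ := exists_ne (0 : V)
    obtain ⟨w, hw⟩ := hnd v hv
    have hvw : ω v ((ω v w)⁻¹ • w) = 1 := by simp [hw]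
    obtain ⟨J', hJ'⟩ := ih _ (h ▸ finrank_pairOrthogonal_lt hvw)
      (ω := ω.domRestrict₁₂ (pairOrthogonal ω v _) (pairOrthogonal ω v _)) (fun x => hω x)
      (domRestrict₁₂_pairOrthogonal_nondegenerate hω hvw hnd) rfl
    exact exists_isCompatibleComplexStructure_of_pairOrthogonal hω hvw hJ'

theorem ContractibleSpace.of_comp_eq_id {X Y : Type*} [TopologicalSpace X] [TopologicalSpace Y]
    [ContractibleSpace Y] (f : C(X, Y)) (g : C(Y, X)) (hgf : g.comp f = .id X) :
    ContractibleSpace X := by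
  rw [contractible_iff_id_nullhomotopic, ← hgf, ← ContinuousMap.id_comp f]
  exact ((id_nullhomotopic Y).comp_left f).comp_right g

theorem LinearMap.convexOn_apply_self {E : Type*} [AddCommGroup E] [Module ℝ E]
    {B : E →ₗ[ℝ] E →ₗ[ℝ] ℝ} (hB : ∀ x, 0 ≤ B x x) :
    ConvexOn ℝ univ fun x => B x x := by
  refine ⟨convex_univ, fun x _ y _ a b ha hb hab => ?_⟩
  have hxy := hB (x - y)
  simp only [map_add, map_sub, map_smul, LinearMap.add_apply, LinearMap.sub_apply,
    LinearMap.smul_apply, smul_eq_mul] at hxy ⊢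
  have hb' : b = 1 - a := by linarith
  subst hb'
  nlinarith [mul_nonneg (mul_nonneg ha hb) hxy]

theorem ContinuousAt.ringInverse {R X : Type*} [NormedRing R] [HasSummableGeomSeries R]
    [TopologicalSpace X] {f : X → R} {x : X} (hf : ContinuousAt f x) (hx : IsUnit (f x)) :
    ContinuousAt (fun y => Ring.inverse (f y)) x := by
  obtain ⟨u, hu⟩ := hx
  exact (hu ▸ NormedRing.inverse_continuousAt u).comp hf

theorem ContinuousLinearMap.isUnit_of_injective {𝕜 E : Type*} [NontriviallyNormedField 𝕜]
    [CompleteSpace 𝕜] [NormedAddCommGroup E] [NormedSpace 𝕜 E] [FiniteDimensional 𝕜 E]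
    {T : E →L[𝕜] E} (hT : Injective T) : IsUnit T :=
  have := FiniteDimensional.complete 𝕜 E
  isUnit_iff_bijective.2 ⟨hT, LinearMap.injective_iff_surjective.1 hT⟩

section RingInverse

variable {R M : Type*} [Semiring R] [AddCommMonoid M] [TopologicalSpace M] [Module R M]
  {T : M →L[R] M}

theorem IsUnit.ringInverse_apply_apply (hT : IsUnit T) (x : M) : Ring.inverse T (T x) = x := by
  rw [← mul_apply_eq_comp, Ring.inverse_mul_cancel _ hT, one_apply_eq_self]

theorem IsUnit.apply_ringInverse_apply (hT : IsUnit T) (x : M) : T (Ring.inverse T x) = x := by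
  rw [← mul_apply_eq_comp, Ring.mul_inverse_cancel _ hT, one_apply_eq_self]

end RingInverse

section Cayley

variable {V : Type*} [NormedAddCommGroup V] [NormedSpace ℝ V]
  {ω : V →ₗ[ℝ] V →ₗ[ℝ] ℝ} {J₀ : V →L[ℝ] V}

theorem apply_one_sub_mul_apply {J : V →L[ℝ] V} (hJ₀ : ∀ v, J₀ (J₀ v) = -v)
    (hJ : ∀ v, J (J v) = -v) (x : V) : J₀ ((1 - J₀ * J) x) = (1 - J₀ * J) (J x) := by
  simp only [sub_apply, one_apply_eq_self, mul_apply_eq_comp, map_sub, hJ₀, hJ, map_neg]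
  abel

variable (ω J₀) in
def skewContractions : Set (V →L[ℝ] V) :=
  {W | (∀ v, W (J₀ v) = -J₀ (W v)) ∧ (∀ a b, ω (W a) b = -ω a (W b)) ∧
    ∀ v, v ≠ 0 → ω (W v) (J₀ (W v)) < ω v (J₀ v)}

theorem convex_skewContractions (hJ₀ : J₀ ∈ compatibleComplexStructures V ω) :
    Convex ℝ (skewContractions ω J₀) := by
  have hq : ConvexOn ℝ univ fun x => ω x (J₀ x) :=
    LinearMap.convexOn_apply_self (B := ω.compl₂ (J₀ : V →ₗ[ℝ] V)) fun x => by
      rcases eq_or_ne x 0 with rfl | hx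
      · simp
      · exact (hJ₀.2.2 x hx).le
  rintro W₁ ⟨h₁J, h₁ω, h₁q⟩ W₂ ⟨h₂J, h₂ω, h₂q⟩ a b ha hb hab
  refine ⟨fun v => ?_, fun x y => ?_, fun v hv => ?_⟩
  · simp only [add_apply, smul_apply, h₁J, h₂J, map_add, map_smul]
    module
  · simp only [add_apply, smul_apply, map_add, map_smul, LinearMap.add_apply,
      LinearMap.smul_apply, smul_eq_mul, h₁ω, h₂ω]
    ring
  · exact (hq.convex_lt _ ⟨mem_univ _, h₁q v hv⟩ ⟨mem_univ _, h₂q v hv⟩ ha hb hab).2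

theorem zero_mem_skewContractions (hJ₀ : J₀ ∈ compatibleComplexStructures V ω) :
    0 ∈ skewContractions ω J₀ :=
  ⟨by simp, by simp, fun v hv => by simpa using hJ₀.2.2 v hv⟩

theorem isUnit_one_sub_of_mem_skewContractions [FiniteDimensional ℝ V] {W : V →L[ℝ] V}
    (hW : W ∈ skewContractions ω J₀) : IsUnit (1 - W) := by
  refine ContinuousLinearMap.isUnit_of_injective <|
    (injective_iff_map_eq_zero _).2 fun x hx => ?_
  by_contra hx0
  have hWx : W x = x := by
    rw [sub_apply, one_apply_eq_self, sub_eq_zero] at hx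
    exact hx.symm
  exact (hW.2.2 x hx0).ne (by rw [hWx])

variable (J₀) in
noncomputable def cayley (W : V →L[ℝ] V) : V →L[ℝ] V :=
  (1 - W) * J₀ * Ring.inverse (1 - W)

theorem cayley_apply_one_sub [FiniteDimensional ℝ V] {W : V →L[ℝ] V}
    (hW : W ∈ skewContractions ω J₀) (x : V) :
    cayley J₀ W ((1 - W) x) = (1 - W) (J₀ x) := by
  rw [cayley, mul_apply_eq_comp,
    (isUnit_one_sub_of_mem_skewContractions hW).ringInverse_apply_apply, mul_apply_eq_comp]

theorem cayley_mem [FiniteDimensional ℝ V] (hJ₀ : J₀ ∈ compatibleComplexStructures V ω)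
    {W : V →L[ℝ] V}
    (hW : W ∈ skewContractions ω J₀) : cayley J₀ W ∈ compatibleComplexStructures V ω := by
  have hsurj : Surjective ⇑(1 - W) := fun v =>
    ⟨_, (isUnit_one_sub_of_mem_skewContractions hW).apply_ringInverse_apply v⟩
  have key := cayley_apply_one_sub hW
  obtain ⟨hWJ, hWω, hWq⟩ := hW
  have hform : ∀ x y, ω ((1 - W) x) ((1 - W) y) = ω x y - ω x (W (W y)) := fun x y => by
    simp only [sub_apply, one_apply_eq_self, map_sub, LinearMap.sub_apply, hWω]
    ring
  have hWWJ : ∀ z, W (W (J₀ z)) = J₀ (W (W z)) := fun z => by rw [hWJ, map_neg, hWJ, neg_neg]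
  refine ⟨fun v => ?_, fun v w => ?_, fun v hv => ?_⟩
  · obtain ⟨x, rfl⟩ := hsurj v
    rw [key, key, hJ₀.1, map_neg]
  · obtain ⟨x, rfl⟩ := hsurj v
    obtain ⟨y, rfl⟩ := hsurj w
    rw [key, key, hform, hform, hWWJ, hJ₀.2.1, hJ₀.2.1]
  · obtain ⟨x, rfl⟩ := hsurj v
    have hx : x ≠ 0 := by rintro rfl; simp at hv
    have hWWq : ω x (W (W (J₀ x))) = ω (W x) (J₀ (W x)) := by
      rw [← neg_neg (ω x (W _)), ← hWω, hWJ, map_neg, neg_neg]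
    rw [key, hform, hWWq]
    linarith [hWq x hx]

theorem isUnit_one_sub_mul [FiniteDimensional ℝ V] (hω : ω.IsAlt)
    (hJ₀ : J₀ ∈ compatibleComplexStructures V ω) {J : V →L[ℝ] V}
    (hJ : J ∈ compatibleComplexStructures V ω) : IsUnit (1 - J₀ * J) := by
  refine ContinuousLinearMap.isUnit_of_injective <|
    (injective_iff_map_eq_zero _).2 fun x hx => ?_
  by_contra hx0
  have h : ω ((1 - J₀ * J) x) (J₀ x) = ω x (J₀ x) + ω x (J x) := by
    rw [sub_apply, one_apply_eq_self, mul_apply_eq_comp, map_sub, LinearMap.sub_apply, hJ₀.2.1]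
    linarith [hω.neg x (J x)]
  rw [hx, map_zero, LinearMap.zero_apply] at h
  linarith [hJ₀.2.2 x hx0, hJ.2.2 x hx0]

variable (J₀) in
noncomputable def invCayley (J : V →L[ℝ] V) : V →L[ℝ] V :=
  1 - (2 : ℝ) • Ring.inverse (1 - J₀ * J)

theorem invCayley_apply_one_sub_mul {J : V →L[ℝ] V} (hJ : IsUnit (1 - J₀ * J)) (x : V) :
    invCayley J₀ J ((1 - J₀ * J) x) = -x - J₀ (J x) := by
  rw [invCayley, sub_apply, smul_apply, hJ.ringInverse_apply_apply]
  simp only [one_apply_eq_self, sub_apply, mul_apply_eq_comp]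
  module

theorem invCayley_mem [FiniteDimensional ℝ V] (hω : ω.IsAlt)
    (hJ₀ : J₀ ∈ compatibleComplexStructures V ω) {J : V →L[ℝ] V}
    (hJ : J ∈ compatibleComplexStructures V ω) :
    invCayley J₀ J ∈ skewContractions ω J₀ := by
  have hD := isUnit_one_sub_mul hω hJ₀ hJ
  have hsurj : Surjective ⇑(1 - J₀ * J) := fun v => ⟨_, hD.apply_ringInverse_apply v⟩
  have key := invCayley_apply_one_sub_mul hD
  have hD' : ∀ x, (1 - J₀ * J) x = x - J₀ (J x) := fun _ => rfl
  have hJ₀D := apply_one_sub_mul_apply hJ₀.1 hJ.1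
  obtain ⟨hJ₀sq, hJ₀ω, hJ₀pos⟩ := hJ₀
  obtain ⟨hJsq, hJω, hJpos⟩ := hJ
  refine ⟨fun v => ?_, fun a b => ?_, fun v hv => ?_⟩
  · obtain ⟨x, rfl⟩ := hsurj v
    rw [hJ₀D, key, key, hJsq]
    simp only [map_sub, map_neg, hJ₀sq]
    abel
  · obtain ⟨x, rfl⟩ := hsurj a
    obtain ⟨y, rfl⟩ := hsurj b
    rw [key, key, hD', hD']
    simp only [map_sub, map_neg, LinearMap.sub_apply, LinearMap.neg_apply, hJ₀ω, hJω]
    ring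
  · obtain ⟨x, rfl⟩ := hsurj v
    have hx : x ≠ 0 := by rintro rfl; simp at hv
    rw [key, hD']
    simp only [map_sub, map_neg, LinearMap.sub_apply, LinearMap.neg_apply, hJ₀sq, hJ₀ω]
    linarith [hJpos x hx, hω.neg x (J x)]

theorem cayley_invCayley [FiniteDimensional ℝ V] (hω : ω.IsAlt)
    (hJ₀ : J₀ ∈ compatibleComplexStructures V ω) {J : V →L[ℝ] V}
    (hJ : J ∈ compatibleComplexStructures V ω) : cayley J₀ (invCayley J₀ J) = J := by
  have hD := isUnit_one_sub_mul hω hJ₀ hJ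
  have hJ₀D := apply_one_sub_mul_apply hJ₀.1 hJ.1
  have h2 : ∀ x, (1 - invCayley J₀ J) ((1 - J₀ * J) x) = (2 : ℝ) • x := fun x => by
    rw [sub_apply, one_apply_eq_self, invCayley_apply_one_sub_mul hD]
    simp only [sub_apply, one_apply_eq_self, mul_apply_eq_comp]
    module
  ext v
  have := cayley_apply_one_sub (invCayley_mem hω hJ₀ hJ) ((1 - J₀ * J) ((2 : ℝ)⁻¹ • v))
  rw [h2, hJ₀D, h2, smul_inv_smul₀ two_ne_zero, map_smul, smul_inv_smul₀ two_ne_zero] at this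
  exact this

theorem continuousOn_cayley [FiniteDimensional ℝ V] :
    ContinuousOn (cayley J₀) (skewContractions ω J₀) := fun _ hW =>
  (((continuous_const.sub continuous_id).mul continuous_const).continuousAt.mul
    ((continuous_const.sub continuous_id).continuousAt.ringInverse
      (isUnit_one_sub_of_mem_skewContractions hW))).continuousWithinAt

theorem continuousOn_invCayley [FiniteDimensional ℝ V] (hω : ω.IsAlt)
    (hJ₀ : J₀ ∈ compatibleComplexStructures V ω) :
    ContinuousOn (invCayley J₀) (compatibleComplexStructures V ω) := fun _ hJ =>
  (continuousAt_const.sub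
    (((continuous_const.sub (continuous_const.mul continuous_id)).continuousAt.ringInverse
      (isUnit_one_sub_mul hω hJ₀ hJ)).const_smul (2 : ℝ))).continuousWithinAt

theorem contractibleSpace_compatibleComplexStructures [FiniteDimensional ℝ V] (hω : ω.IsAlt)
    (hJ₀ : J₀ ∈ compatibleComplexStructures V ω) :
    ContractibleSpace (compatibleComplexStructures V ω) := by
  have : ContractibleSpace (skewContractions ω J₀) :=
    (convex_skewContractions hJ₀).contractibleSpace ⟨0, zero_mem_skewContractions hJ₀⟩
  have hΦ : MapsTo (invCayley J₀) (compatibleComplexStructures V ω)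
      (skewContractions ω J₀) := fun _ hJ => invCayley_mem hω hJ₀ hJ
  have hΨ : MapsTo (cayley J₀) (skewContractions ω J₀)
      (compatibleComplexStructures V ω) := fun _ hW => cayley_mem hJ₀ hW
  refine .of_comp_eq_id ⟨_, (continuousOn_invCayley hω hJ₀).mapsToRestrict hΦ⟩
    ⟨_, continuousOn_cayley.mapsToRestrict hΨ⟩ ?_
  ext J : 2
  exact cayley_invCayley hω hJ₀ J.2

end Cayley

/-- For a nondegenerate alternating bilinear form `ω` on a finite-dimensional real vector
space `V`, the space of `ω`-compatible linear complex structures on `V` is nonempty and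
contractible. -/
theorem compatibleComplexStructures_nonempty_and_contractible
    (V : Type*) [NormedAddCommGroup V] [NormedSpace ℝ V] [FiniteDimensional ℝ V]
    (ω : V →ₗ[ℝ] V →ₗ[ℝ] ℝ)
    (h_alt : ∀ v, ω v v = 0)
    (h_nondeg : ∀ v, v ≠ 0 → ∃ w, ω v w ≠ 0) :
    (compatibleComplexStructures V ω).Nonempty ∧
      ContractibleSpace (compatibleComplexStructures V ω) := by
  obtain ⟨J, hJ⟩ := exists_isCompatibleComplexStructure h_alt h_nondeg
  have hJ₀ : LinearMap.toContinuousLinearMap J ∈ compatibleComplexStructures V ω := hJ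
  exact ⟨⟨_, hJ₀⟩, contractibleSpace_compatibleComplexStructures h_alt hJ₀⟩
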